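/- For every integer n ≥ 1, m_{4n+2} = 2n + m_{n+1}, where m_k (resp. M_k) is the minimum (resp. maximum) number of alternations among length-k factors of the Thue–Morse sequence. -/

import Mathlib

/-- The reduction of a word: replace each maximal run of identical characters
by a single character. -/
def red {α : Type*} [DecidableEq α] (w : List α) : List α :=
  w.destutter (· ≠ ·)

/-- The length-`k` factor of the infinite sequence `x` (1-indexed) starting at
position `i`. -/
def factorAt {α : Type*} (x : ℕ → α) (i k : ℕ) : List α :=
  (List.range k).map (fun j => x (i + j))

/-- The reduced factor complexity: the number of length-`n` factors of `x`,
counted up to reduced-equivalence (`red v = red w`). -/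
noncomputable def redFactorComplexity {α : Type*} [DecidableEq α]
    (x : ℕ → α) (n : ℕ) : ℕ :=
  Set.ncard { u : List α | ∃ i ≥ 1, u = red (factorAt x i n) }

/-- The Thue–Morse sequence (1-indexed): `t n` is the parity of the number of
1's in the binary expansion of `n - 1`. -/
def thueMorse (n : ℕ) : Bool :=
  decide ((Nat.digits 2 (n - 1)).sum % 2 = 1)

/-- The number of alternations (occurrences of 01 or 10) in a binary word. -/
def alt (w : List Bool) : ℕ :=
  (List.zipWith (fun a b => a != b) w w.tail).count true

/-- The minimum number of alternations among length-`k` factors of Thue–Morse. -/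
noncomputable def tmAltMin (k : ℕ) : ℕ :=
  sInf { a : ℕ | ∃ i ≥ 1, a = alt (factorAt thueMorse i k) }

/-- The maximum number of alternations among length-`k` factors of Thue–Morse. -/
noncomputable def tmAltMax (k : ℕ) : ℕ :=
  sSup { a : ℕ | ∃ i ≥ 1, a = alt (factorAt thueMorse i k) }

/-- The Thue–Morse morphism `0 → 01`, `1 → 10`. -/
def mu (w : List Bool) : List Bool :=
  w.flatMap (fun b => if b then [true, false] else [false, true])

/-- The regular paperfolding sequence (1-indexed): writing `n = n' * 2^k` with
`n'` odd, `f n = 1` iff `n' ≡ 3 (mod 4)`. -/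
def paperfold (n : ℕ) : Bool :=
  decide ((n / 2 ^ (n.factorization 2)) % 4 = 3)

/-- The reduced abelian complexity: the number of length-`n` factors of `x`,
counted up to the equivalence identifying `v` and `w` whenever `red v` is a
rearrangement of the characters of `red w`. -/
noncomputable def redAbelianComplexity {α : Type*} [DecidableEq α]
    (x : ℕ → α) (n : ℕ) : ℕ :=
  Set.ncard { m : Multiset α | ∃ i ≥ 1, m = ↑(red (factorAt x i n)) }

/-!
Thue–Morse satisfies `t(2q+1) = t(q+1)` and `t(2q+2) = ¬t(q+1)` (1-indexed), so it alternates at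
every odd position `2q+1`, and alternates at the even position `2q` exactly when it does not
alternate at `q`. Hence, if `E(a, b) = altCount thueMorse a b` counts the alternation positions
`m ∈ [a, b)`, then `E(a, b) + E(⌈a/2⌉, ⌈b/2⌉) = b - a`. Applying this twice to a window of
length `4n + 2` gives `E(i, i + 4n + 1) ≥ 2n + E(j, j + n)` for some `j`, with equality for
`i = 4c - 2` and `j = c`.
-/

open Finset

lemma digits_two_sum_two_mul (q : ℕ) : (Nat.digits 2 (2 * q)).sum = (Nat.digits 2 q).sum := by
  rcases Nat.eq_zero_or_pos q with rfl | hq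
  · simp
  · rw [Nat.digits_def' (by norm_num) (by omega)]
    simp

lemma digits_two_sum_two_mul_add_one (q : ℕ) :
    (Nat.digits 2 (2 * q + 1)).sum = (Nat.digits 2 q).sum + 1 := by
  rw [Nat.digits_def' (by norm_num) (by omega), show (2 * q + 1) / 2 = q by omega]
  simp [add_comm]

lemma thueMorse_two_mul_add_one (q : ℕ) : thueMorse (2 * q + 1) = thueMorse (q + 1) := by
  simp [thueMorse, digits_two_sum_two_mul]

lemma thueMorse_two_mul_add_two (q : ℕ) : thueMorse (2 * q + 2) = !thueMorse (q + 1) := by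
  simp only [thueMorse, Nat.add_sub_cancel, show 2 * q + 2 - 1 = 2 * q + 1 by omega,
    digits_two_sum_two_mul_add_one]
  rcases Nat.mod_two_eq_zero_or_one (Nat.digits 2 q).sum with h | h <;> simp [Nat.add_mod, h]

lemma thueMorse_two_mul {q : ℕ} (hq : 1 ≤ q) : thueMorse (2 * q) = !thueMorse q := by
  obtain ⟨p, rfl⟩ : ∃ p, q = p + 1 := ⟨q - 1, by omega⟩
  exact thueMorse_two_mul_add_two p

lemma thueMorse_two_mul_add_one_ne (q : ℕ) :
    thueMorse (2 * q + 1) ≠ thueMorse (2 * q + 1 + 1) := by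
  rw [thueMorse_two_mul_add_one, thueMorse_two_mul_add_two]
  cases thueMorse (q + 1) <;> decide

lemma thueMorse_two_mul_ne_iff {q : ℕ} (hq : 1 ≤ q) :
    thueMorse (2 * q) ≠ thueMorse (2 * q + 1) ↔ thueMorse q = thueMorse (q + 1) := by
  rw [thueMorse_two_mul hq, thueMorse_two_mul_add_one]
  cases thueMorse q <;> cases thueMorse (q + 1) <;> decide

lemma thueMorse_eq_succ_iff {m : ℕ} (hm : 1 ≤ m) :
    thueMorse m = thueMorse (m + 1) ↔
      ∃ q, 1 ≤ q ∧ m = 2 * q ∧ thueMorse q ≠ thueMorse (q + 1) := by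
  rcases Nat.even_or_odd' m with ⟨q, rfl | rfl⟩
  · rw [← not_iff_not, ← ne_eq, thueMorse_two_mul_ne_iff (by omega)]
    simp [show 1 ≤ q by omega]
  · simp only [thueMorse_two_mul_add_one_ne q, false_iff]
    omega

lemma alt_cons_cons (a b : Bool) (w : List Bool) :
    alt (a :: b :: w) = alt (b :: w) + if a ≠ b then 1 else 0 := by
  cases a <;> cases b <;> simp [alt]

lemma factorAt_succ {α : Type*} (x : ℕ → α) (i k : ℕ) :
    factorAt x i (k + 1) = x i :: factorAt x (i + 1) k := by
  simp [factorAt, List.range_succ_eq_map, Nat.add_assoc, Nat.add_comm 1]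

def altCount (x : ℕ → Bool) (a b : ℕ) : ℕ :=
  #{m ∈ Ico a b | x m ≠ x (m + 1)}

lemma alt_factorAt_succ (x : ℕ → Bool) (i k : ℕ) :
    alt (factorAt x i (k + 1)) = altCount x i (i + k) := by
  induction k generalizing i with
  | zero => simp [factorAt, alt, altCount]
  | succ k ih =>
    rw [factorAt_succ x i, factorAt_succ x (i + 1), alt_cons_cons, ← factorAt_succ, ih,
      altCount, altCount, ← insert_Ico_add_one_left_eq_Ico (show i < i + (k + 1) by omega),
      filter_insert, Nat.add_right_comm]
    split_ifs <;> simp [card_insert_of_notMem, Nat.add_assoc]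

lemma altCount_mono_right (x : ℕ → Bool) (a : ℕ) {b b' : ℕ} (h : b ≤ b') :
    altCount x a b ≤ altCount x a b' :=
  card_le_card (filter_subset_filter _ (Ico_subset_Ico le_rfl h))

lemma card_filter_thueMorse_eq_succ {a : ℕ} (ha : 1 ≤ a) (b : ℕ) :
    #{m ∈ Ico a b | thueMorse m = thueMorse (m + 1)}
      = altCount thueMorse ((a + 1) / 2) ((b + 1) / 2) := by
  apply card_nbij' (· / 2) (2 * ·)
  · intro m hm
    simp only [coe_filter, mem_Ico, Set.mem_ofPred_eq] at hm ⊢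
    obtain ⟨q, hq, rfl, hne⟩ := (thueMorse_eq_succ_iff (by omega)).1 hm.2
    exact ⟨by omega, by simpa using hne⟩
  · intro q hq
    simp only [coe_filter, mem_Ico, Set.mem_ofPred_eq] at hq ⊢
    exact ⟨by omega, (thueMorse_eq_succ_iff (by omega)).2 ⟨q, by omega, rfl, hq.2⟩⟩
  · intro m hm
    simp only [coe_filter, mem_Ico, Set.mem_ofPred_eq] at hm
    obtain ⟨q, -, rfl, -⟩ := (thueMorse_eq_succ_iff (by omega)).1 hm.2
    simp
  · intro q _
    simp

lemma altCount_thueMorse_add_altCount_half {a : ℕ} (ha : 1 ≤ a) (b : ℕ) :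
    altCount thueMorse a b + altCount thueMorse ((a + 1) / 2) ((b + 1) / 2) = b - a := by
  rw [← card_filter_thueMorse_eq_succ ha, altCount, add_comm, ← Nat.card_Ico]
  exact card_filter_add_card_filter_not _

lemma tmAltMin_succ (k : ℕ) :
    tmAltMin (k + 1) = sInf ((fun i => altCount thueMorse i (i + k)) '' Set.Ici 1) := by
  simp only [tmAltMin, alt_factorAt_succ]
  congr 1
  ext a
  simp [eq_comm]

lemma altCount_thueMorse_four_mul_sub_two {c : ℕ} (hc : 1 ≤ c) (n : ℕ) :
    altCount thueMorse (4 * c - 2) (4 * c - 2 + (4 * n + 1))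
      = 2 * n + altCount thueMorse c (c + n) := by
  have h₁ := altCount_thueMorse_add_altCount_half (a := 4 * c - 2) (by omega)
    (4 * c - 2 + (4 * n + 1))
  have h₂ := altCount_thueMorse_add_altCount_half (a := 2 * c - 1) (by omega) (2 * c + 2 * n)
  rw [show (4 * c - 2 + 1) / 2 = 2 * c - 1 by omega,
    show (4 * c - 2 + (4 * n + 1) + 1) / 2 = 2 * c + 2 * n by omega] at h₁
  rw [show (2 * c - 1 + 1) / 2 = c by omega, show (2 * c + 2 * n + 1) / 2 = c + n by omega] at h₂
  omega

lemma exists_le_altCount_thueMorse {i : ℕ} (hi : 1 ≤ i) (n : ℕ) :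
    ∃ j ≥ 1,
      2 * n + altCount thueMorse j (j + n) ≤ altCount thueMorse i (i + (4 * n + 1)) := by
  have h₁ := altCount_thueMorse_add_altCount_half hi (i + (4 * n + 1))
  set a := (i + 1) / 2
  set b := (i + (4 * n + 1) + 1) / 2
  have h₂ := altCount_thueMorse_add_altCount_half (a := a) (by omega) b
  have h₃ := altCount_mono_right thueMorse ((a + 1) / 2)
    (show (a + 1) / 2 + n ≤ (b + 1) / 2 by omega)
  exact ⟨(a + 1) / 2, by omega, by omega⟩

theorem stmt8_general (n : ℕ) :
    tmAltMin (4 * n + 2) = 2 * n + tmAltMin (n + 1) := by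
  rw [show 4 * n + 2 = 4 * n + 1 + 1 by rfl, tmAltMin_succ, tmAltMin_succ]
  have hne (k : ℕ) : ((fun i => altCount thueMorse i (i + k)) '' Set.Ici 1).Nonempty :=
    (Set.nonempty_Ici).image _
  apply le_antisymm
  · obtain ⟨c, hc, hmin⟩ := Nat.sInf_mem (hne n)
    rw [← hmin, ← altCount_thueMorse_four_mul_sub_two hc]
    exact Nat.sInf_le ⟨4 * c - 2, Set.mem_Ici.2 (by have := Set.mem_Ici.1 hc; omega), rfl⟩
  · refine le_csInf (hne _) ?_
    rintro _ ⟨i, hi, rfl⟩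
    obtain ⟨j, hj, hle⟩ := exists_le_altCount_thueMorse hi n
    exact le_trans (Nat.add_le_add_left (Nat.sInf_le (Set.mem_image_of_mem _ hj)) _) hle

theorem stmt8 (n : ℕ) (hn : 1 ≤ n) :
    tmAltMin (4 * n + 2) = 2 * n + tmAltMin (n + 1) :=
  stmt8_general n
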